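/- (Half-space kernel lower bound at infinity.) Let n ≥ 1 and α ∈ (0,2). There exists a constant C > 0 depending only on n and α such that for every λ ∈ ℝ there is R > 0 (depending on n, α, λ) with the property: for every x ∈ Σ_λ with |x| ≥ R, ∫_{{y ∈ ℝⁿ : y₁ > λ}} |x - y|^{-(n+α)} dy ≥ C·|x|^{-α}. Equivalently, since the map y ↦ y^λ carries Σ_λ onto {y₁ > λ} preserving Lebesgue measure, ∫_{Σ_λ} |x - y^λ|^{-(n+α)} dy ≥ C·|x|^{-α} for all x ∈ Σ_λ with |x| ≥ R. -/

import Mathlib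

/-!
The ball of radius `‖x‖` centred at `x + 3‖x‖ e₁` lies in `{y₁ > λ}` as soon as `λ ≤ ‖x‖`, and on it
`‖x - y‖ ≤ 4‖x‖`; so the integral is at least `|B₁| (4‖x‖)^{-(n+α)} ‖x‖ⁿ = |B₁| 4^{-(n+α)} ‖x‖^{-α}`.
The kernel is integrable there because the half-space stays at distance `λ - x₁ > 0` from `x` and
`n + α > n`. The reflection `y ↦ y^λ` is an isometry, hence preserves Lebesgue measure, and maps
`Σ_λ` onto `{y₁ > λ}`, so the second integral equals the first.
-/

open MeasureTheory Metric Filter Set Topology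

noncomputable section

abbrev Rn (n : ℕ) := EuclideanSpace ℝ (Fin n)

/-- Membership in the weighted space `L_α`. -/
def MemLspace (n : ℕ) (α : ℝ) (u : Rn n → ℝ) : Prop :=
  Integrable (fun x : Rn n => |u x| / (1 + ‖x‖ ^ ((n : ℝ) + α)))

/-- `u` is `C^{1,1}` near `x`: differentiable with Lipschitz gradient in a ball around `x`. -/
def C11Near {n : ℕ} (u : Rn n → ℝ) (x : Rn n) : Prop :=
  ∃ ε > 0, ∃ K : NNReal,
    (∀ y ∈ ball x ε, DifferentiableAt ℝ u y) ∧
    LipschitzOnWith K (fderiv ℝ u) (ball x ε)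

/-- The principal value integral defining `(-Δ)^{α/2} u (x)` (with normalization constant
`Cna`) converges to `L`. -/
def HasFracLap (n : ℕ) (α Cna : ℝ) (u : Rn n → ℝ) (x : Rn n) (L : ℝ) : Prop :=
  Tendsto
    (fun ε : ℝ =>
      Cna * ∫ z in {z : Rn n | ε ≤ ‖x - z‖}, (u x - u z) / ‖x - z‖ ^ ((n : ℝ) + α))
    (𝓝[>] (0 : ℝ)) (𝓝 L)

/-- Reflection of `x` across the hyperplane `{x : x₁ = lam}`. -/
def reflPt {n : ℕ} (hn : 0 < n) (lam : ℝ) (x : Rn n) : Rn n :=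
  WithLp.toLp 2 (Function.update x ⟨0, hn⟩ (2 * lam - x ⟨0, hn⟩))

/-- The half space `Σ_λ = {x : x₁ < λ}`. -/
def SigmaLam {n : ℕ} (hn : 0 < n) (lam : ℝ) : Set (Rn n) :=
  {x : Rn n | x ⟨0, hn⟩ < lam}

section HaarKernel

variable {E : Type*} [NormedAddCommGroup E] [NormedSpace ℝ E] [FiniteDimensional ℝ E]
  [MeasurableSpace E] [BorelSpace E] (μ : Measure E) [μ.IsAddHaarMeasure]

theorem integrableOn_norm_sub_rpow_neg_compl_ball {s : ℝ} (hs : (Module.finrank ℝ E : ℝ) < s)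
    (x : E) {δ : ℝ} (hδ : 0 < δ) :
    IntegrableOn (fun y => ‖x - y‖ ^ (-s)) (ball x δ)ᶜ μ := by
  have hs0 : 0 < s := (Nat.cast_nonneg _).trans_lt hs
  have hdom : Integrable (fun y => (1 + δ⁻¹) ^ s * (1 + ‖x - y‖) ^ (-s)) μ :=
    ((integrable_one_add_norm hs).comp_sub_left x).const_mul _
  have hmeas : Measurable fun y => ‖x - y‖ ^ (-s) := by fun_prop
  refine hdom.integrableOn.mono' hmeas.aestronglyMeasurable ?_
  rw [ae_restrict_iff' measurableSet_ball.compl]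
  refine Eventually.of_forall fun y hy => ?_
  have hδy : δ ≤ ‖x - y‖ := by simpa [dist_eq_norm'] using hy
  have hpos : 0 < ‖x - y‖ := hδ.trans_le hδy
  have hle : 1 + ‖x - y‖ ≤ (1 + δ⁻¹) * ‖x - y‖ := by
    have : 1 ≤ δ⁻¹ * ‖x - y‖ := by rw [inv_mul_eq_div, one_le_div hδ]; exact hδy
    linarith
  rw [Real.norm_of_nonneg (by positivity)]
  calc ‖x - y‖ ^ (-s) = (1 + δ⁻¹) ^ s * ((1 + δ⁻¹) * ‖x - y‖) ^ (-s) := by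
        rw [Real.mul_rpow (by positivity) hpos.le, ← mul_assoc, ← Real.rpow_add (by positivity),
          add_neg_cancel, Real.rpow_zero, one_mul]
    _ ≤ (1 + δ⁻¹) ^ s * (1 + ‖x - y‖) ^ (-s) := by
        gcongr _ * ?_
        exact Real.rpow_le_rpow_of_nonpos (by positivity) hle (by linarith)

theorem mul_rpow_finrank_le_setIntegral {f : E → ℝ} {S : Set E} (hf : IntegrableOn f S μ)
    (hf0 : 0 ≤ f) {c : E} {r m : ℝ} (hr : 0 < r) (hball : ball c r ⊆ S)
    (hm : ∀ y ∈ ball c r, m ≤ f y) :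
    m * (r ^ Module.finrank ℝ E * μ.real (ball 0 1)) ≤ ∫ y in S, f y ∂μ :=
  calc m * (r ^ Module.finrank ℝ E * μ.real (ball 0 1)) = m * μ.real (ball c r) := by
        rw [measureReal_def, measureReal_def, Measure.addHaar_ball_of_pos μ c hr,
          ENNReal.toReal_mul, ENNReal.toReal_ofReal (by positivity)]
    _ ≤ ∫ y in ball c r, f y ∂μ :=
        setIntegral_ge_of_const_le_real measurableSet_ball measure_ball_lt_top.ne hm
          (hf.mono_set hball)
    _ ≤ ∫ y in S, f y ∂μ := setIntegral_mono_set hf (Eventually.of_forall hf0) hball.eventuallyLE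

end HaarKernel

theorem le_setIntegral_halfspace_norm_sub_rpow_neg {n : ℕ} {α : ℝ} (hα : 0 < α) (i : Fin n)
    {lam : ℝ} {x : Rn n} (hx : x i < lam) (hlam : lam ≤ ‖x‖) :
    volume.real (ball (0 : Rn n) 1) * 4 ^ (-((n : ℝ) + α)) * ‖x‖ ^ (-α) ≤
      ∫ y in {y : Rn n | lam < y i}, ‖x - y‖ ^ (-((n : ℝ) + α)) := by
  have hcoord (y z : Rn n) : |y i - z i| ≤ ‖y - z‖ := by
    simpa only [dist_eq_norm, Real.norm_eq_abs] using PiLp.dist_apply_le y z i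
  have hxi : -‖x‖ ≤ x i := by simpa using (abs_le.1 (hcoord x 0)).1
  have hx0 : 0 < ‖x‖ := by linarith
  set p : Rn n := x + (3 * ‖x‖) • EuclideanSpace.single i 1
  have hpi : p i = x i + 3 * ‖x‖ := by simp [p]
  have hxp : ‖x - p‖ = 3 * ‖x‖ := by simp [p, norm_smul]
  have hball : ball p ‖x‖ ⊆ {y | lam < y i} := by
    intro y hy
    rw [mem_ball, dist_eq_norm] at hy
    show lam < y i
    linarith [(abs_le.1 (hcoord y p)).1]
  have hkernel : ∀ y ∈ ball p ‖x‖,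
      (4 * ‖x‖) ^ (-((n : ℝ) + α)) ≤ ‖x - y‖ ^ (-((n : ℝ) + α)) := by
    intro y hy
    have hyi : lam < y i := hball hy
    have hpos : 0 < ‖x - y‖ := by linarith [(abs_le.1 (hcoord x y)).1]
    rw [mem_ball, dist_eq_norm'] at hy
    have hle : ‖x - y‖ ≤ 4 * ‖x‖ := by linarith [norm_sub_le_norm_sub_add_norm_sub x p y]
    exact Real.rpow_le_rpow_of_nonpos hpos hle (by linarith)
  have hint : IntegrableOn (fun y => ‖x - y‖ ^ (-((n : ℝ) + α))) {y : Rn n | lam < y i} := by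
    refine (integrableOn_norm_sub_rpow_neg_compl_ball volume (by simpa using hα) x
      (sub_pos.2 hx)).mono_set fun y (hy : lam < y i) => ?_
    rw [mem_compl_iff, mem_ball, dist_eq_norm, not_lt]
    linarith [(abs_le.1 (hcoord y x)).2]
  have hpow : ‖x‖ ^ n * ‖x‖ ^ (-((n : ℝ) + α)) = ‖x‖ ^ (-α) := by
    rw [← Real.rpow_natCast, ← Real.rpow_add hx0]
    ring_nf
  calc volume.real (ball (0 : Rn n) 1) * 4 ^ (-((n : ℝ) + α)) * ‖x‖ ^ (-α)
      = (4 * ‖x‖) ^ (-((n : ℝ) + α)) * (‖x‖ ^ n * volume.real (ball (0 : Rn n) 1)) := by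
        rw [Real.mul_rpow (by norm_num) hx0.le, ← hpow]
        ring
    _ ≤ _ := by
      simpa using mul_rpow_finrank_le_setIntegral volume hint
        (fun y => Real.rpow_nonneg (norm_nonneg _) _) hx0 hball hkernel

section Reflection

variable {n : ℕ} (hn : 0 < n) (lam : ℝ)

theorem reflPt_apply_self (x : Rn n) : reflPt hn lam x ⟨0, hn⟩ = 2 * lam - x ⟨0, hn⟩ := by
  simp [reflPt]

theorem reflPt_apply_of_ne (x : Rn n) {j : Fin n} (hj : j ≠ ⟨0, hn⟩) :
    reflPt hn lam x j = x j := by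
  simp [reflPt, hj]

theorem reflPt_involutive : Function.Involutive (reflPt hn lam) := fun x => by
  ext j
  by_cases hj : j = ⟨0, hn⟩
  · subst hj
    simp only [reflPt_apply_self, sub_sub_cancel]
  · simp only [reflPt_apply_of_ne hn lam _ hj]

theorem isometry_reflPt : Isometry (reflPt hn lam) := by
  refine Isometry.of_dist_eq fun x y => ?_
  simp only [EuclideanSpace.dist_eq]
  congr 1
  refine Finset.sum_congr rfl fun j _ => ?_
  by_cases hj : j = ⟨0, hn⟩
  · subst hj
    rw [reflPt_apply_self, reflPt_apply_self, dist_sub_left]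
  · rw [reflPt_apply_of_ne hn lam _ hj, reflPt_apply_of_ne hn lam _ hj]

def reflPtIsometryEquiv : Rn n ≃ᵢ Rn n :=
  { (reflPt_involutive hn lam).toPerm with isometry_toFun := isometry_reflPt hn lam }

theorem measurePreserving_reflPt : MeasurePreserving (reflPt hn lam) := by
  have := (reflPtIsometryEquiv hn lam).measurePreserving_euclideanHausdorffMeasure n
  rwa [EuclideanSpace.euclideanHausdorffMeasure_eq_volume] at this

theorem preimage_reflPt_upperHalfspace :
    reflPt hn lam ⁻¹' {y | lam < y ⟨0, hn⟩} = SigmaLam hn lam := by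
  ext y
  simp only [SigmaLam, mem_preimage, mem_ofPred_eq, reflPt_apply_self]
  constructor <;> intro h <;> linarith

theorem setIntegral_sigmaLam_comp_reflPt (g : Rn n → ℝ) :
    ∫ y in SigmaLam hn lam, g (reflPt hn lam y) = ∫ y in {y : Rn n | lam < y ⟨0, hn⟩}, g y := by
  rw [← preimage_reflPt_upperHalfspace]
  exact (measurePreserving_reflPt hn lam).setIntegral_preimage_emb
    (reflPtIsometryEquiv hn lam).toHomeomorph.measurableEmbedding g _

end Reflection

theorem halfspace_kernel_lower_bound_at_infinity_general
    (n : ℕ) (hn : 0 < n) (α : ℝ) (hα0 : 0 < α) :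
    ∃ C > (0 : ℝ), ∀ lam : ℝ, ∃ R > (0 : ℝ), ∀ x ∈ SigmaLam hn lam, R ≤ ‖x‖ →
      C * ‖x‖ ^ (-α) ≤
        (∫ y in {y : Rn n | lam < y ⟨0, hn⟩}, ‖x - y‖ ^ (-((n : ℝ) + α))) ∧
      C * ‖x‖ ^ (-α) ≤
        ∫ y in SigmaLam hn lam, ‖x - reflPt hn lam y‖ ^ (-((n : ℝ) + α)) := by
  have hball : 0 < volume.real (ball (0 : Rn n) 1) :=
    ENNReal.toReal_pos (measure_ball_pos _ _ one_pos).ne' measure_ball_lt_top.ne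
  refine ⟨volume.real (ball (0 : Rn n) 1) * 4 ^ (-((n : ℝ) + α)), by positivity,
    fun lam => ⟨|lam| + 1, by positivity, fun x hx hR => ?_⟩⟩
  have key := le_setIntegral_halfspace_norm_sub_rpow_neg hα0 ⟨0, hn⟩ hx
    (by linarith [le_abs_self lam])
  refine ⟨key, ?_⟩
  rwa [setIntegral_sigmaLam_comp_reflPt hn lam fun y => ‖x - y‖ ^ (-((n : ℝ) + α))]

/-- **Half-space kernel lower bound at infinity.** -/
theorem halfspace_kernel_lower_bound_at_infinity
    (n : ℕ) (hn : 0 < n) (α : ℝ) (hα0 : 0 < α) (hα2 : α < 2) :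
    ∃ C > (0 : ℝ), ∀ lam : ℝ, ∃ R > (0 : ℝ), ∀ x ∈ SigmaLam hn lam, R ≤ ‖x‖ →
      C * ‖x‖ ^ (-α) ≤
        (∫ y in {y : Rn n | lam < y ⟨0, hn⟩}, ‖x - y‖ ^ (-((n : ℝ) + α))) ∧
      C * ‖x‖ ^ (-α) ≤
        ∫ y in SigmaLam hn lam, ‖x - reflPt hn lam y‖ ^ (-((n : ℝ) + α)) :=
  halfspace_kernel_lower_bound_at_infinity_general n hn α hα0

end
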